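/- arXiv:2405.02176 — 3 statements merged into one kernel-verified Lean document; each statement's English description precedes it below -/
import Mathlib

section
/- For every nonempty bounded subset B of the hyperbolic disk 𝔻, there is a unique smallest closed hyperbolic disk containing B; its center P(B) satisfies: if B is contained in the hyperbolic disk of radius δ centered at 0, then the hyperbolic distance from P(B) to 0 is at most δ. -/
/-- The Poincaré hyperbolic distance between two points of the open unit disk `𝔻 ⊆ ℂ`:
`hypDist z w = 2 * artanh |(z - w)/(1 - z̄ w)|`, written via
`artanh t = (1/2) * log ((1 + t)/(1 - t))`. -/
noncomputable def hypDist (z w : ℂ) : ℝ :=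
  Real.log ((1 + ‖(z - w) / (1 - (starRingEnd ℂ) z * w)‖) /
    (1 - ‖(z - w) / (1 - (starRingEnd ℂ) z * w)‖))

/-- The radius of the smallest closed hyperbolic disk containing `B`. -/
noncomputable def minRad (B : Set ℂ) : ℝ :=
  sInf {R | 0 ≤ R ∧ ∃ c : ℂ, ‖c‖ < 1 ∧ B ⊆ {w | hypDist c w ≤ R}}

/-!
The disk embeds isometrically in the upper sheet of the hyperboloid `⟪v, v⟫ = 1` of the
Minkowski form on `ℝ × ℂ`, where `⟪X z, X w⟫ = cosh d(z, w)`. A positive combination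
`l • X c + u • X c'` normalises back to a point `X m`, so that
`cosh d(m, ·) = (l cosh d(c, ·) + u cosh d(c', ·)) / √(l² + u² + 2lu cosh d(c, c'))`.
If `c` is the center of a smallest disk, of radius `r`, and `B` lies in the `R`-disk about `c'`,
taking `l = 1` and `u` small shows `cosh r * cosh d(c, c') ≤ cosh R`: for another minimal
center `c'` this forces `c = c'`, and for `c' = 0` it gives `d(0, c) ≤ δ`. Existence is a
compactness argument: the centers of nearly minimal disks stay in a fixed compact part of `𝔻`.
-/

open Complex ComplexConjugate

noncomputable def coshHypDist (z w : ℂ) : ℝ :=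
  1 + 2 * normSq (z - w) / ((1 - normSq z) * (1 - normSq w))

section Basics

variable {z w : ℂ}

lemma normSq_lt_one_iff : normSq z < 1 ↔ ‖z‖ < 1 := by
  rw [normSq_eq_norm_sq, sq_lt_one_iff₀ (norm_nonneg z)]

lemma normSq_one_sub_conj_mul_sub_normSq_sub (z w : ℂ) :
    normSq (1 - conj z * w) - normSq (z - w) = (1 - normSq z) * (1 - normSq w) := by
  simp only [normSq_apply, sub_re, sub_im, mul_re, mul_im, conj_re, conj_im, one_re, one_im]
  ring

lemma one_sub_normSq_mul_pos (hz : ‖z‖ < 1) (hw : ‖w‖ < 1) :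
    0 < (1 - normSq z) * (1 - normSq w) :=
  mul_pos (sub_pos.2 (normSq_lt_one_iff.2 hz)) (sub_pos.2 (normSq_lt_one_iff.2 hw))

lemma normSq_sub_lt_normSq_one_sub_conj_mul (hz : ‖z‖ < 1) (hw : ‖w‖ < 1) :
    normSq (z - w) < normSq (1 - conj z * w) := by
  linarith [normSq_one_sub_conj_mul_sub_normSq_sub z w, one_sub_normSq_mul_pos hz hw]

lemma Real.cosh_log_one_add_div_one_sub {t : ℝ} (ht : |t| < 1) :
    Real.cosh (Real.log ((1 + t) / (1 - t))) = (1 + t ^ 2) / (1 - t ^ 2) := by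
  obtain ⟨h1, h2⟩ := abs_lt.1 ht
  have h1t : (0 : ℝ) < 1 + t := by linarith
  have h2t : (0 : ℝ) < 1 - t := by linarith
  have h3t : (1 : ℝ) - t ^ 2 ≠ 0 := by nlinarith
  rw [Real.cosh_eq, Real.exp_neg, Real.exp_log (div_pos h1t h2t)]
  field_simp
  ring

lemma norm_div_one_sub_conj_mul_lt_one (hz : ‖z‖ < 1) (hw : ‖w‖ < 1) :
    ‖(z - w) / (1 - conj z * w)‖ < 1 := by
  have hlt := normSq_sub_lt_normSq_one_sub_conj_mul hz hw
  rw [← sq_lt_one_iff₀ (norm_nonneg _), norm_div, div_pow, Complex.sq_norm, Complex.sq_norm,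
    div_lt_one ((normSq_nonneg _).trans_lt hlt)]
  exact hlt

lemma hypDist_nonneg (hz : ‖z‖ < 1) (hw : ‖w‖ < 1) : 0 ≤ hypDist z w := by
  have ht := norm_div_one_sub_conj_mul_lt_one hz hw
  refine Real.log_nonneg ((one_le_div (sub_pos.2 ht)).2 ?_)
  linarith [norm_nonneg ((z - w) / (1 - conj z * w))]

lemma cosh_hypDist (hz : ‖z‖ < 1) (hw : ‖w‖ < 1) :
    Real.cosh (hypDist z w) = coshHypDist z w := by
  have hlt := normSq_sub_lt_normSq_one_sub_conj_mul hz hw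
  have hsq : ‖(z - w) / (1 - conj z * w)‖ ^ 2 = normSq (z - w) / normSq (1 - conj z * w) := by
    rw [norm_div, div_pow, Complex.sq_norm, Complex.sq_norm]
  have habs : |‖(z - w) / (1 - conj z * w)‖| < 1 := by
    rw [abs_norm]; exact norm_div_one_sub_conj_mul_lt_one hz hw
  have hden : normSq (1 - conj z * w) ≠ 0 := ((normSq_nonneg _).trans_lt hlt).ne'
  have hne : normSq (1 - conj z * w) - normSq (z - w) ≠ 0 := (sub_pos.2 hlt).ne'
  rw [hypDist, Real.cosh_log_one_add_div_one_sub habs, hsq, coshHypDist,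
    ← normSq_one_sub_conj_mul_sub_normSq_sub z w]
  generalize normSq (1 - conj z * w) = D, normSq (z - w) = N at *
  field_simp
  ring

lemma hypDist_le_iff (hz : ‖z‖ < 1) (hw : ‖w‖ < 1) {R : ℝ} (hR : 0 ≤ R) :
    hypDist z w ≤ R ↔ coshHypDist z w ≤ Real.cosh R := by
  rw [← cosh_hypDist hz hw, Real.cosh_le_cosh, abs_of_nonneg (hypDist_nonneg hz hw),
    abs_of_nonneg hR]

lemma coshHypDist_comm (z w : ℂ) : coshHypDist z w = coshHypDist w z := by
  rw [coshHypDist, coshHypDist, mul_comm (1 - normSq z), ← normSq_neg, neg_sub]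

lemma coshHypDist_self (z : ℂ) : coshHypDist z z = 1 := by
  simp [coshHypDist]

lemma one_le_coshHypDist (hz : ‖z‖ < 1) (hw : ‖w‖ < 1) : 1 ≤ coshHypDist z w :=
  le_add_of_nonneg_right <|
    div_nonneg (mul_nonneg zero_le_two (normSq_nonneg _)) (one_sub_normSq_mul_pos hz hw).le

lemma eq_of_coshHypDist_le_one (hz : ‖z‖ < 1) (hw : ‖w‖ < 1) (h : coshHypDist z w ≤ 1) :
    z = w := by
  have hfrac : 2 * normSq (z - w) / ((1 - normSq z) * (1 - normSq w)) ≤ 0 := by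
    rw [coshHypDist] at h; linarith
  have hN : normSq (z - w) ≤ 0 := by
    have := (div_le_iff₀ (one_sub_normSq_mul_pos hz hw)).1 hfrac
    linarith
  exact sub_eq_zero.1 (normSq_eq_zero.1 (le_antisymm hN (normSq_nonneg _)))

lemma coshHypDist_mul_eq (hz : ‖z‖ < 1) (hw : ‖w‖ < 1) :
    coshHypDist z w * ((1 - normSq z) * (1 - normSq w)) =
      normSq (1 - conj z * w) + normSq (z - w) := by
  have hP := (one_sub_normSq_mul_pos hz hw).ne'
  rw [coshHypDist, add_mul, div_mul_cancel₀ _ hP]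
  linarith [normSq_one_sub_conj_mul_sub_normSq_sub z w]

lemma norm_le_of_coshHypDist_le (hz : ‖z‖ < 1) (hw : ‖w‖ < 1) {K : ℝ}
    (h : coshHypDist z w ≤ K) : ‖z‖ ≤ 1 - (1 - ‖w‖) / (4 * K) := by
  have hK : 0 < K := zero_lt_one.trans_le ((one_le_coshHypDist hz hw).trans h)
  have hz0 := norm_nonneg z
  have hw0 := norm_nonneg w
  have hnum : 1 - ‖w‖ ≤ ‖1 - conj z * w‖ := by
    have := norm_sub_norm_le (1 : ℂ) (conj z * w)
    rw [norm_one, norm_mul, Complex.norm_conj] at this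
    nlinarith
  have hP : (1 - normSq z) * (1 - normSq w) ≤ 4 * (1 - ‖z‖) * (1 - ‖w‖) := by
    rw [normSq_eq_norm_sq, normSq_eq_norm_sq]
    have h4 : (1 + ‖z‖) * (1 + ‖w‖) ≤ 4 := by nlinarith
    nlinarith [mul_nonneg (mul_nonneg (sub_nonneg.2 hz.le) (sub_nonneg.2 hw.le)) (sub_nonneg.2 h4)]
  have hsq : (1 - ‖w‖) ^ 2 ≤ K * (4 * (1 - ‖z‖) * (1 - ‖w‖)) :=
    calc (1 - ‖w‖) ^ 2 ≤ normSq (1 - conj z * w) := by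
          rw [normSq_eq_norm_sq]; exact pow_le_pow_left₀ (by linarith) hnum 2
      _ ≤ coshHypDist z w * ((1 - normSq z) * (1 - normSq w)) := by
          rw [coshHypDist_mul_eq hz hw]; linarith [normSq_nonneg (z - w)]
      _ ≤ K * (4 * (1 - ‖z‖) * (1 - ‖w‖)) :=
          mul_le_mul h hP (one_sub_normSq_mul_pos hz hw).le hK.le
  rw [le_sub_comm, div_le_iff₀ (by positivity)]
  nlinarith

lemma continuousAt_coshHypDist_left (hz : ‖z‖ < 1) (hw : ‖w‖ < 1) :
    ContinuousAt (coshHypDist · w) z := by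
  have hP := (one_sub_normSq_mul_pos hz hw).ne'
  unfold coshHypDist
  fun_prop (disch := exact hP)

end Basics

section Hyperboloid

def minkowski (v v' : ℝ × ℂ) : ℝ := v.1 * v'.1 - (v.2.re * v'.2.re + v.2.im * v'.2.im)

lemma minkowski_comm (v v' : ℝ × ℂ) : minkowski v v' = minkowski v' v := by
  unfold minkowski; ring

lemma minkowski_add_left (v v' v'' : ℝ × ℂ) :
    minkowski (v + v') v'' = minkowski v v'' + minkowski v' v'' := by
  simp only [minkowski, Prod.fst_add, Prod.snd_add, add_re, add_im]; ring

lemma minkowski_smul_left (r : ℝ) (v v' : ℝ × ℂ) :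
    minkowski (r • v) v' = r * minkowski v v' := by
  simp only [minkowski, Prod.smul_fst, Prod.smul_snd, smul_eq_mul, smul_re, smul_im]; ring

noncomputable def toHyperboloid (z : ℂ) : ℝ × ℂ :=
  ((1 + normSq z) / (1 - normSq z), (2 / (1 - normSq z)) • z)

variable {z w : ℂ}

lemma toHyperboloid_fst_pos (hz : ‖z‖ < 1) : 0 < (toHyperboloid z).1 :=
  div_pos (by linarith [normSq_nonneg z]) (sub_pos.2 (normSq_lt_one_iff.2 hz))

lemma minkowski_toHyperboloid (hz : ‖z‖ < 1) (hw : ‖w‖ < 1) :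
    minkowski (toHyperboloid z) (toHyperboloid w) = coshHypDist z w := by
  have hz' := (sub_pos.2 (normSq_lt_one_iff.2 hz)).ne'
  have hw' := (sub_pos.2 (normSq_lt_one_iff.2 hw)).ne'
  simp only [minkowski, toHyperboloid, coshHypDist, smul_re, smul_im, smul_eq_mul]
  field_simp
  simp only [normSq_apply, sub_re, sub_im]
  ring

lemma exists_eq_smul_toHyperboloid {v : ℝ × ℂ} (h₁ : 0 < v.1) (h₂ : 0 < minkowski v v) :
    ∃ m : ℂ, ‖m‖ < 1 ∧ v = √(minkowski v v) • toHyperboloid m := by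
  obtain ⟨t, x⟩ := v
  set s := √(minkowski (t, x) (t, x))
  have hs : 0 < s := Real.sqrt_pos.2 h₂
  have hss : normSq x = t ^ 2 - s ^ 2 := by
    rw [Real.sq_sqrt h₂.le, minkowski, normSq_apply]; ring
  have hts : 0 < t + s := add_pos h₁ hs
  have hm : normSq ((t + s)⁻¹ • x) = (t - s) / (t + s) := by
    rw [real_smul, normSq_mul, normSq_ofReal, hss]
    field_simp
    ring
  refine ⟨(t + s)⁻¹ • x, ?_, ?_⟩
  · rw [← normSq_lt_one_iff, hm, div_lt_one hts]
    linarith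
  have h1m : 1 - normSq ((t + s)⁻¹ • x) = 2 * s / (t + s) := by
    rw [hm]; field_simp; ring
  refine Prod.ext ?_ ?_
  · simp only [toHyperboloid, Prod.smul_fst, smul_eq_mul]
    rw [h1m, hm]
    field_simp
    ring
  · simp only [toHyperboloid, Prod.smul_snd, smul_smul, h1m]
    rw [show s * (2 / (2 * s / (t + s)) * (t + s)⁻¹) = 1 by field_simp, one_smul]

lemma exists_sqrt_mul_coshHypDist_eq {z₁ z₂ : ℂ} (h₁ : ‖z₁‖ < 1) (h₂ : ‖z₂‖ < 1) {l u : ℝ}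
    (hl : 0 < l) (hu : 0 < u) :
    ∃ m : ℂ, ‖m‖ < 1 ∧ ∀ w : ℂ, ‖w‖ < 1 →
      √(l ^ 2 + u ^ 2 + 2 * l * u * coshHypDist z₁ z₂) * coshHypDist m w =
        l * coshHypDist z₁ w + u * coshHypDist z₂ w := by
  set v := l • toHyperboloid z₁ + u • toHyperboloid z₂
  have hlin : ∀ v', minkowski v v' =
      l * minkowski (toHyperboloid z₁) v' + u * minkowski (toHyperboloid z₂) v' := fun v' => by
    rw [minkowski_add_left, minkowski_smul_left, minkowski_smul_left]
  have hv : ∀ w, ‖w‖ < 1 →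
      minkowski v (toHyperboloid w) = l * coshHypDist z₁ w + u * coshHypDist z₂ w := by
    intro w hw
    rw [hlin, minkowski_toHyperboloid h₁ hw, minkowski_toHyperboloid h₂ hw]
  have hvv : minkowski v v = l ^ 2 + u ^ 2 + 2 * l * u * coshHypDist z₁ z₂ := by
    rw [hlin, minkowski_comm (toHyperboloid z₁), minkowski_comm (toHyperboloid z₂), hv z₁ h₁,
      hv z₂ h₂, coshHypDist_self, coshHypDist_self, coshHypDist_comm z₂ z₁]
    ring
  have hv₁ : 0 < v.1 := by
    simp only [v, Prod.fst_add, Prod.smul_fst, smul_eq_mul]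
    have := toHyperboloid_fst_pos h₁
    have := toHyperboloid_fst_pos h₂
    positivity
  have hvv_pos : 0 < minkowski v v := by
    rw [hvv]
    nlinarith [one_le_coshHypDist h₁ h₂, mul_pos hl hu]
  obtain ⟨m, hm, hvm⟩ := exists_eq_smul_toHyperboloid hv₁ hvv_pos
  refine ⟨m, hm, fun w hw => ?_⟩
  rw [← hv w hw, ← hvv, ← minkowski_toHyperboloid hm hw, ← minkowski_smul_left, ← hvm]

end Hyperboloid

section MinRad

variable {B : Set ℂ}

lemma minRad_nonneg (B : Set ℂ) : 0 ≤ minRad B :=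
  Real.sInf_nonneg fun _ h => h.1

lemma minRad_le {c : ℂ} {R : ℝ} (hc : ‖c‖ < 1) (hR : 0 ≤ R) (hB : B ⊆ {w | hypDist c w ≤ R}) :
    minRad B ≤ R :=
  csInf_le ⟨0, fun _ h => h.1⟩ ⟨hR, c, hc, hB⟩

lemma cosh_minRad_le (hne : B.Nonempty) (hsub : ∀ z ∈ B, ‖z‖ < 1) {m : ℂ} (hm : ‖m‖ < 1)
    {K : ℝ} (hK : ∀ w ∈ B, coshHypDist m w ≤ K) : Real.cosh (minRad B) ≤ K := by
  obtain ⟨w₀, hw₀⟩ := hne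
  have hK₁ : 1 ≤ K := (one_le_coshHypDist hm (hsub w₀ hw₀)).trans (hK w₀ hw₀)
  have harcosh := Real.arcosh_nonneg hK₁
  have hle : minRad B ≤ Real.arcosh K := minRad_le hm harcosh fun w hw => by
    change hypDist m w ≤ _
    rw [hypDist_le_iff hm (hsub w hw) harcosh, Real.cosh_arcosh hK₁]
    exact hK w hw
  rw [← Real.cosh_arcosh hK₁, Real.cosh_le_cosh, abs_of_nonneg (minRad_nonneg B),
    abs_of_nonneg harcosh]
  exact hle

theorem cosh_minRad_mul_coshHypDist_le (hne : B.Nonempty) (hsub : ∀ z ∈ B, ‖z‖ < 1)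
    {c c' : ℂ} {R : ℝ} (hc : ‖c‖ < 1) (hcB : B ⊆ {w | hypDist c w ≤ minRad B})
    (hc' : ‖c'‖ < 1) (hc'B : B ⊆ {w | hypDist c' w ≤ R}) :
    Real.cosh (minRad B) * coshHypDist c c' ≤ Real.cosh R := by
  obtain ⟨w₀, hw₀⟩ := hne
  have hR : 0 ≤ R := (hypDist_nonneg hc' (hsub w₀ hw₀)).trans (hc'B hw₀)
  set a := Real.cosh (minRad B)
  set b := Real.cosh R
  set D := coshHypDist c c'
  have ha : 1 ≤ a := Real.one_le_cosh _
  have hb : 1 ≤ b := Real.one_le_cosh _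
  by_contra! h
  set τ := a * (a * D - b) / (b ^ 2 + 1)
  have hτ : 0 < τ := div_pos (mul_pos (by linarith) (by linarith)) (by positivity)
  have hτdef : τ * (b ^ 2 + 1) = a * (a * D - b) := div_mul_cancel₀ _ (by positivity)
  obtain ⟨m, hm, hmw⟩ := exists_sqrt_mul_coshHypDist_eq hc hc' one_pos hτ
  set s := √(1 ^ 2 + τ ^ 2 + 2 * 1 * τ * D)
  have hs : 0 < s := Real.sqrt_pos.2 (by nlinarith [one_le_coshHypDist hc hc'])
  have hcover : a ≤ (a + τ * b) / s := cosh_minRad_le ⟨w₀, hw₀⟩ hsub hm fun w hw => by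
    have hw' := hsub w hw
    have h₁ := (hypDist_le_iff hc hw' (minRad_nonneg B)).1 (hcB hw)
    have h₂ := (hypDist_le_iff hc' hw' hR).1 (hc'B hw)
    rw [le_div_iff₀ hs, mul_comm, hmw w hw']
    nlinarith
  -- to first order in `τ`, the disk about `m` has cosh-radius `a - τ (a D - b) < a`
  have hsq : (a + τ * b) ^ 2 < (a * s) ^ 2 := by
    rw [mul_pow, Real.sq_sqrt (by nlinarith [one_le_coshHypDist hc hc'])]
    nlinarith [mul_pos hτ (mul_pos (by linarith : (0 : ℝ) < a) (by linarith : 0 < a * D - b))]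
  have := pow_le_pow_left₀ (by positivity) ((le_div_iff₀ hs).1 hcover) 2
  linarith

lemma eq_of_minRad_centers (hne : B.Nonempty) (hsub : ∀ z ∈ B, ‖z‖ < 1) {c c' : ℂ}
    (hc : ‖c‖ < 1) (hcB : B ⊆ {w | hypDist c w ≤ minRad B})
    (hc' : ‖c'‖ < 1) (hc'B : B ⊆ {w | hypDist c' w ≤ minRad B}) : c = c' := by
  have h := cosh_minRad_mul_coshHypDist_le hne hsub hc hcB hc' hc'B
  refine eq_of_coshHypDist_le_one hc hc' ?_
  rwa [mul_le_iff_le_one_right (Real.cosh_pos _)] at h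

lemma hypDist_le_of_minRad_center (hne : B.Nonempty) (hsub : ∀ z ∈ B, ‖z‖ < 1) {c c' : ℂ}
    {R : ℝ} (hc : ‖c‖ < 1) (hcB : B ⊆ {w | hypDist c w ≤ minRad B})
    (hc' : ‖c'‖ < 1) (hc'B : B ⊆ {w | hypDist c' w ≤ R}) : hypDist c' c ≤ R := by
  obtain ⟨w₀, hw₀⟩ := hne
  have hR : 0 ≤ R := (hypDist_nonneg hc' (hsub w₀ hw₀)).trans (hc'B hw₀)
  have h := cosh_minRad_mul_coshHypDist_le ⟨w₀, hw₀⟩ hsub hc hcB hc' hc'B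
  rw [hypDist_le_iff hc' hc hR, coshHypDist_comm]
  nlinarith [Real.one_le_cosh (minRad B), one_le_coshHypDist hc hc']

theorem exists_minRad_center (hne : B.Nonempty) (hsub : ∀ z ∈ B, ‖z‖ < 1)
    (hbdd : ∃ R : ℝ, ∀ z ∈ B, hypDist 0 z ≤ R) :
    ∃ c : ℂ, ‖c‖ < 1 ∧ B ⊆ {w | hypDist c w ≤ minRad B} := by
  obtain ⟨w₀, hw₀⟩ := hne
  obtain ⟨R₀, hR₀⟩ := hbdd
  have h₀ : ‖(0 : ℂ)‖ < 1 := by simp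
  obtain ⟨Rs, hanti, hlim, hRs⟩ := exists_seq_tendsto_sInf
    (S := {R | 0 ≤ R ∧ ∃ c : ℂ, ‖c‖ < 1 ∧ B ⊆ {w | hypDist c w ≤ R}})
    ⟨R₀, (hypDist_nonneg h₀ (hsub w₀ hw₀)).trans (hR₀ w₀ hw₀), 0, h₀, hR₀⟩
    ⟨0, fun _ h => h.1⟩
  choose cs hcs hcsB using fun n => (hRs n).2
  set ρ := 1 - (1 - ‖w₀‖) / (4 * Real.cosh (Rs 0))
  have hρ : ρ < 1 := sub_lt_self _ (div_pos (sub_pos.2 (hsub w₀ hw₀)) (by positivity))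
  have hcsρ : ∀ n, cs n ∈ Metric.closedBall 0 ρ := fun n => by
    rw [mem_closedBall_zero_iff]
    refine norm_le_of_coshHypDist_le (hcs n) (hsub w₀ hw₀) ?_
    rw [← hypDist_le_iff (hcs n) (hsub w₀ hw₀) (hRs 0).1]
    exact (hcsB n hw₀).trans (hanti (Nat.zero_le n))
  obtain ⟨c, hcρ, φ, hφ, hlimc⟩ := (isCompact_closedBall 0 ρ).tendsto_subseq hcsρ
  have hc : ‖c‖ < 1 := (mem_closedBall_zero_iff.1 hcρ).trans_lt hρ
  refine ⟨c, hc, fun w hw => ?_⟩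
  change hypDist c w ≤ _
  rw [hypDist_le_iff hc (hsub w hw) (minRad_nonneg B)]
  refine le_of_tendsto_of_tendsto' ((continuousAt_coshHypDist_left hc (hsub w hw)).tendsto.comp
    hlimc) ((Real.continuous_cosh.tendsto _).comp (hlim.comp hφ.tendsto_atTop)) fun k => ?_
  exact (hypDist_le_iff (hcs _) (hsub w hw) (hRs _).1).1 (hcsB (φ k) hw)

end MinRad

/-- For every nonempty bounded subset `B` of the hyperbolic disk there is a unique smallest
closed hyperbolic disk containing `B`; moreover if `B` is contained in the hyperbolic disk of
radius `δ` centered at `0`, then the center `c` of the smallest disk satisfies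
`hypDist 0 c ≤ δ`. -/
theorem stmt_1 (B : Set ℂ) (hne : B.Nonempty)
    (hsub : ∀ z ∈ B, ‖z‖ < 1)
    (hbdd : ∃ R : ℝ, ∀ z ∈ B, hypDist 0 z ≤ R) :
    (∃! c : ℂ, ‖c‖ < 1 ∧ B ⊆ {w | hypDist c w ≤ minRad B}) ∧
    (∀ c : ℂ, ‖c‖ < 1 → B ⊆ {w | hypDist c w ≤ minRad B} →
      ∀ δ : ℝ, B ⊆ {w | hypDist 0 w ≤ δ} → hypDist 0 c ≤ δ) := by
  obtain ⟨c, hc, hcB⟩ := exists_minRad_center hne hsub hbdd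
  exact ⟨⟨c, ⟨hc, hcB⟩, fun c' hc' => eq_of_minRad_centers hne hsub hc'.1 hc'.2 hc hcB⟩,
    fun c hc hcB δ hδ => hypDist_le_of_minRad_center hne hsub hc hcB (by simp) hδ⟩
end

section
/- Let {B_k}_{k∈I} be a finite or countable collection of pairwise disjoint balls in ℝ² (or a closed surface) and {a_k} nonnegative reals. For each λ ≥ 1 there is a constant C depending only on λ such that ‖Σ_k a_k χ_{λB_k}‖_{L²} ≤ C ‖Σ_k a_k χ_{B_k}‖_{L²}, where λB_k is the ball concentric with B_k of λ times the radius. -/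
/-!
Write `F = ∑ aₖ χ_{λBₖ}`, `G = ∑ aₖ χ_{Bₖ}` and let `M` be the maximal function of `F` over the
enlarged balls `λBₖ`. Since `|λBₖ| = λ² |Bₖ|` and `M ≥ ⨍_{λBₖ} F` on `Bₖ ⊆ λBₖ`,
`‖F‖₂² = ∑ aₖ ∫_{λBₖ} F ≤ λ² ∑ aₖ ∫_{Bₖ} M = λ² ∫ G M ≤ λ² ‖G‖₂ ‖M‖₂`.
The Vitali covering lemma gives the weak type estimate `t |{M > t}| ≲ ∫_{F > t/2} F`, and the
layer cake formula turns it into `‖M‖₂ ≲ ‖F‖₂`; for a finite family `‖F‖₂ < ∞`, so it cancels.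
Countable families follow by monotone convergence.
-/

open MeasureTheory Metric Set
open scoped ENNReal

section Layercake

theorem setOf_ofReal_lt_inter_Ioi {a : ℝ≥0∞} (ha : a ≠ ⊤) :
    {t : ℝ | ENNReal.ofReal t < a} ∩ Ioi 0 = Ioo 0 a.toReal := by
  ext t
  simp +contextual [ENNReal.ofReal_lt_iff_lt_toReal, le_of_lt, ha, and_comm]

theorem measurableSet_setOf_ofReal_lt (a : ℝ≥0∞) :
    MeasurableSet {t : ℝ | ENNReal.ofReal t < a} :=
  measurableSet_lt ENNReal.measurable_ofReal measurable_const

theorem setLIntegral_Ioi_indicator_one_ofReal_lt (a : ℝ≥0∞) :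
    ∫⁻ t in Ioi 0, {t : ℝ | ENNReal.ofReal t < a}.indicator (fun _ => 1) t = a := by
  rw [← Pi.one_def, lintegral_indicator_one (measurableSet_setOf_ofReal_lt a),
    Measure.restrict_apply (measurableSet_setOf_ofReal_lt a)]
  rcases eq_or_ne a ⊤ with rfl | ha
  · simp [ENNReal.ofReal_lt_top]
  · rw [setOf_ofReal_lt_inter_Ioi ha, Real.volume_Ioo, sub_zero, ENNReal.ofReal_toReal ha]

theorem setLIntegral_Ioi_indicator_two_mul_ofReal_lt (a : ℝ≥0∞) :
    ∫⁻ t in Ioi 0, {t : ℝ | ENNReal.ofReal t < a}.indicator (fun t => 2 * ENNReal.ofReal t) t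
      = a ^ 2 := by
  rw [lintegral_indicator (measurableSet_setOf_ofReal_lt a),
    Measure.restrict_restrict (measurableSet_setOf_ofReal_lt a)]
  rcases eq_or_ne a ⊤ with rfl | ha
  · simp only [ENNReal.ofReal_lt_top, ofPred_true, univ_inter, ENNReal.top_pow two_ne_zero]
    refine top_unique ?_
    calc (⊤ : ℝ≥0∞) = ∫⁻ _ in Ioi (1 : ℝ), 2 := by simp
      _ ≤ ∫⁻ t in Ioi (1 : ℝ), 2 * ENNReal.ofReal t :=
          setLIntegral_mono' measurableSet_Ioi fun t ht =>
            le_mul_of_one_le_right' (ENNReal.one_le_ofReal.mpr (le_of_lt ht))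
      _ ≤ ∫⁻ t in Ioi 0, 2 * ENNReal.ofReal t :=
          lintegral_mono_set (Ioi_subset_Ioi zero_le_one)
  · have hint : ∫ t in Ioo 0 a.toReal, 2 * t = a.toReal ^ 2 := by
      rw [← integral_Ioc_eq_integral_Ioo, ← intervalIntegral.integral_of_le ENNReal.toReal_nonneg,
        intervalIntegral.integral_const_mul, integral_id]
      ring
    calc ∫⁻ t in {t : ℝ | ENNReal.ofReal t < a} ∩ Ioi 0, 2 * ENNReal.ofReal t
        = ∫⁻ t in Ioo 0 a.toReal, ENNReal.ofReal (2 * t) := by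
          simp only [setOf_ofReal_lt_inter_Ioi ha, ENNReal.ofReal_mul zero_le_two,
            ENNReal.ofReal_ofNat]
      _ = a ^ 2 := by
          rw [← ofReal_integral_eq_lintegral_ofReal, hint,
            ENNReal.ofReal_pow ENNReal.toReal_nonneg, ENNReal.ofReal_toReal ha]
          · exact (continuous_const_mul 2).integrableOn_Icc.mono_set Ioo_subset_Icc_self
          · exact ae_restrict_of_forall_mem measurableSet_Ioo fun t ht => by
              simpa using ht.1.le

theorem lintegral_mul_setLIntegral_indicator_comm {X : Type*} [MeasurableSpace X]
    {μ : Measure X} [SFinite μ] {f g : X → ℝ≥0∞} (hf : Measurable f) (hg : Measurable g)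
    {φ : ℝ → ℝ≥0∞} (hφ : Measurable φ) :
    ∫⁻ x, g x * (∫⁻ t in Ioi 0, {t | ENNReal.ofReal t < f x}.indicator φ t) ∂μ =
      ∫⁻ t in Ioi 0, φ t * ∫⁻ x in {x | ENNReal.ofReal t < f x}, g x ∂μ := by
  have hD : MeasurableSet {p : X × ℝ | ENNReal.ofReal p.2 < f p.1} :=
    measurableSet_lt (ENNReal.measurable_ofReal.comp measurable_snd) (hf.comp measurable_fst)
  calc ∫⁻ x, g x * (∫⁻ t in Ioi 0, {t | ENNReal.ofReal t < f x}.indicator φ t) ∂μ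
      = ∫⁻ x, (∫⁻ t in Ioi 0, g x * {t | ENNReal.ofReal t < f x}.indicator φ t) ∂μ :=
        lintegral_congr fun x =>
          (lintegral_const_mul _ (hφ.indicator (measurableSet_setOf_ofReal_lt _))).symm
    _ = ∫⁻ t in Ioi 0, ∫⁻ x, g x * {t | ENNReal.ofReal t < f x}.indicator φ t ∂μ :=
        lintegral_lintegral_swap
          ((hg.comp measurable_fst).mul ((hφ.comp measurable_snd).indicator hD)).aemeasurable
    _ = ∫⁻ t in Ioi 0, φ t * ∫⁻ x in {x | ENNReal.ofReal t < f x}, g x ∂μ := by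
        refine lintegral_congr fun t => ?_
        rw [← lintegral_const_mul _ hg,
          ← lintegral_indicator (measurableSet_lt measurable_const hf)]
        refine lintegral_congr fun x => ?_
        by_cases hx : ENNReal.ofReal t < f x <;> simp [hx, mul_comm]

end Layercake

section LIntegral

variable {X : Type*} [MeasurableSpace X] {μ : Measure X}

theorem sq_lintegral_mul_le {f g : X → ℝ≥0∞} (hf : AEMeasurable f μ) (hg : AEMeasurable g μ) :
    (∫⁻ x, f x * g x ∂μ) ^ 2 ≤ (∫⁻ x, f x ^ 2 ∂μ) * ∫⁻ x, g x ^ 2 ∂μ := by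
  have := ENNReal.lintegral_mul_le_Lp_mul_Lq μ Real.HolderConjugate.two_two hf hg
  simp only [ENNReal.rpow_two, Pi.mul_apply] at this
  calc (∫⁻ x, f x * g x ∂μ) ^ 2
      ≤ ((∫⁻ x, f x ^ 2 ∂μ) ^ (1 / 2 : ℝ) * (∫⁻ x, g x ^ 2 ∂μ) ^ (1 / 2 : ℝ)) ^ 2 := by
        gcongr
    _ = (∫⁻ x, f x ^ 2 ∂μ) * ∫⁻ x, g x ^ 2 ∂μ := by
        rw [mul_pow, ← ENNReal.rpow_two, ← ENNReal.rpow_two, ← ENNReal.rpow_mul,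
          ← ENNReal.rpow_mul]
        norm_num

theorem lintegral_sum_indicator_const_mul {ι : Type*} {U : ι → Set X}
    (hU : ∀ k, MeasurableSet (U k)) (b : ι → ℝ≥0∞) (S : Finset ι) {φ : X → ℝ≥0∞}
    (hφ : Measurable φ) :
    ∫⁻ x, (∑ k ∈ S, (U k).indicator (fun _ => b k) x) * φ x ∂μ =
      ∑ k ∈ S, b k * ∫⁻ x in U k, φ x ∂μ := by
  simp only [Finset.sum_mul]
  rw [lintegral_finsetSum' S (f := fun k x => (U k).indicator (fun _ => b k) x * φ x)
    fun k _ => ((measurable_const.indicator (hU k)).mul hφ).aemeasurable]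
  refine Finset.sum_congr rfl fun k _ => ?_
  rw [← lintegral_const_mul _ hφ, ← lintegral_indicator (hU k)]
  refine lintegral_congr fun x => ?_
  by_cases hx : x ∈ U k <;> simp [hx]

theorem sq_eLpNorm_two (f : X → ℝ≥0∞) : eLpNorm f 2 μ ^ 2 = ∫⁻ x, f x ^ 2 ∂μ := by
  simpa [ENNReal.rpow_two] using
    eLpNorm_nnreal_pow_eq_lintegral (f := f) (μ := μ) (p := 2) two_ne_zero

theorem eLpNorm_two_le_mul_of_lintegral_sq_le {f g : X → ℝ≥0∞} {C : ℝ≥0∞}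
    (h : ∫⁻ x, f x ^ 2 ∂μ ≤ C ^ 2 * ∫⁻ x, g x ^ 2 ∂μ) : eLpNorm f 2 μ ≤ C * eLpNorm g 2 μ := by
  rwa [← ENNReal.pow_le_pow_left_iff two_ne_zero, mul_pow, sq_eLpNorm_two, sq_eLpNorm_two]

theorem lintegral_sq_tsum_le_of_forall_finset {ι : Type*} [Countable ι] {f g : ι → X → ℝ≥0∞}
    (hf : ∀ k, Measurable (f k)) {C : ℝ≥0∞}
    (h : ∀ S : Finset ι,
      ∫⁻ x, (∑ k ∈ S, f k x) ^ 2 ∂μ ≤ C * ∫⁻ x, (∑ k ∈ S, g k x) ^ 2 ∂μ) :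
    ∫⁻ x, (∑' k, f k x) ^ 2 ∂μ ≤ C * ∫⁻ x, (∑' k, g k x) ^ 2 ∂μ := by
  have hmono : Monotone fun (S : Finset ι) x => (∑ k ∈ S, f k x) ^ 2 := fun S T hST x =>
    ENNReal.pow_le_pow_left (Finset.sum_le_sum_of_subset hST)
  simp only [ENNReal.tsum_eq_iSup_sum, ENNReal.iSup_pow]
  rw [lintegral_iSup_directed (fun S =>
    ((Finset.measurable_sum S fun k _ => hf k).pow_const 2).aemeasurable) hmono.directed_le]
  refine iSup_le fun S => (h S).trans ?_
  gcongr with x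
  exact le_iSup (fun S : Finset ι => (∑ k ∈ S, g k x) ^ 2) S

end LIntegral

section MetricMeasure

variable {X ι : Type*} [MetricSpace X] [MeasurableSpace X] {μ : Measure X} {K : ℝ≥0∞}

/-- The doubling condition in the form used by the Vitali covering lemma, whose enlargement
factor must exceed `3`. -/
def IsQuadruplingWith (μ : Measure X) (K : ℝ≥0∞) : Prop :=
  ∀ x (ρ : ℝ), 0 < ρ → μ (closedBall x (4 * ρ)) ≤ K * μ (ball x ρ)

variable (μ) in
noncomputable def ballMaximalFunction (S : Finset ι) (c : ι → X) (ρ : ι → ℝ) (h : X → ℝ≥0∞)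
    (x : X) : ℝ≥0∞ :=
  ⨆ k ∈ S, (ball (c k) (ρ k)).indicator (fun _ => ⨍⁻ y in ball (c k) (ρ k), h y ∂μ) x

noncomputable def sumBallIndicator (S : Finset ι) (c : ι → X) (ρ : ι → ℝ) (b : ι → ℝ≥0∞)
    (x : X) : ℝ≥0∞ :=
  ∑ k ∈ S, (ball (c k) (ρ k)).indicator (fun _ => b k) x

theorem mul_measure_biUnion_ball_le [OpensMeasurableSpace X] (hK : IsQuadruplingWith μ K)
    (c : ι → X) {ρ : ι → ℝ} (hρ : ∀ k, 0 < ρ k) (E : Finset ι) {h : X → ℝ≥0∞} {s : ℝ≥0∞}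
    (hE : ∀ k ∈ E, s * μ (ball (c k) (ρ k)) ≤ ∫⁻ x in ball (c k) (ρ k), h x ∂μ) :
    s * μ (⋃ k ∈ E, ball (c k) (ρ k)) ≤ K * ∫⁻ x, h x ∂μ := by
  classical
  obtain ⟨R, hR⟩ := (E.finite_toSet.image ρ).bddAbove
  obtain ⟨u, huE, hudisj, hucov⟩ :=
    Vitali.exists_disjoint_subfamily_covering_enlargement_closedBall (E : Set ι) c ρ R
      (fun k hk => hR (mem_image_of_mem ρ hk)) 4 (by norm_num)
  set E₀ := E.filter (· ∈ u)
  have hE₀ : ∀ k, k ∈ E₀ ↔ k ∈ u := fun k => by simpa [E₀] using fun hk => huE hk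
  have hcover : ⋃ k ∈ E, ball (c k) (ρ k) ⊆ ⋃ b ∈ E₀, closedBall (c b) (4 * ρ b) := by
    refine iUnion₂_subset fun k hk => ?_
    obtain ⟨b, hbu, hkb⟩ := hucov k hk
    exact ball_subset_closedBall.trans (hkb.trans (subset_biUnion_of_mem
      (u := fun b => closedBall (c b) (4 * ρ b)) (by simpa using (hE₀ b).2 hbu)))
  have hE₀disj : (E₀ : Set ι).PairwiseDisjoint fun k => ball (c k) (ρ k) :=
    fun k hk l hl hkl => (hudisj ((hE₀ k).1 hk) ((hE₀ l).1 hl) hkl).mono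
      ball_subset_closedBall ball_subset_closedBall
  calc s * μ (⋃ k ∈ E, ball (c k) (ρ k))
      ≤ s * ∑ b ∈ E₀, μ (closedBall (c b) (4 * ρ b)) :=
        mul_le_mul_right ((measure_mono hcover).trans (measure_biUnion_finset_le E₀ _)) s
    _ ≤ s * ∑ b ∈ E₀, K * μ (ball (c b) (ρ b)) := by
        gcongr with b; exact hK _ _ (hρ b)
    _ = K * ∑ b ∈ E₀, s * μ (ball (c b) (ρ b)) := by
        rw [Finset.mul_sum, Finset.mul_sum]
        exact Finset.sum_congr rfl fun b _ => mul_left_comm _ _ _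
    _ ≤ K * ∑ b ∈ E₀, ∫⁻ x in ball (c b) (ρ b), h x ∂μ := by
        gcongr with b hb; exact hE b (Finset.mem_filter.1 hb).1
    _ = K * ∫⁻ x in ⋃ b ∈ E₀, ball (c b) (ρ b), h x ∂μ := by
        rw [lintegral_biUnion_finset hE₀disj fun _ _ => measurableSet_ball]
    _ ≤ K * ∫⁻ x, h x ∂μ := by gcongr; exact Measure.restrict_le_self

section Maximal

variable {S : Finset ι} {c : ι → X} {ρ : ι → ℝ} {h : X → ℝ≥0∞}

theorem setLAverage_le_ballMaximalFunction {k : ι} (hk : k ∈ S) {x : X}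
    (hx : x ∈ ball (c k) (ρ k)) :
    ⨍⁻ y in ball (c k) (ρ k), h y ∂μ ≤ ballMaximalFunction μ S c ρ h x := by
  refine le_trans ?_ (le_biSup _ hk)
  rw [indicator_of_mem hx]

theorem setOf_lt_ballMaximalFunction_subset (s : ℝ≥0∞) :
    {x | s < ballMaximalFunction μ S c ρ h x} ⊆
      ⋃ k ∈ S.filter (fun k => s < ⨍⁻ y in ball (c k) (ρ k), h y ∂μ), ball (c k) (ρ k) := by
  intro x hx
  obtain ⟨k, hk, hlt⟩ : ∃ k, ∃ _ : k ∈ S, s < (ball (c k) (ρ k)).indicator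
      (fun _ => ⨍⁻ y in ball (c k) (ρ k), h y ∂μ) x := by
    simpa only [mem_ofPred_eq, ballMaximalFunction, lt_iSup_iff] using hx
  have hxk : x ∈ ball (c k) (ρ k) := by
    by_contra hxk; simp [indicator_of_notMem hxk] at hlt
  rw [indicator_of_mem hxk] at hlt
  exact mem_biUnion (Finset.mem_filter.2 ⟨hk, hlt⟩) hxk

variable [OpensMeasurableSpace X]

theorem measurable_ballMaximalFunction : Measurable (ballMaximalFunction μ S c ρ h) :=
  .biSup _ S.countable_toSet fun _ _ => measurable_const.indicator measurableSet_ball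

variable [ProperSpace X] [IsFiniteMeasureOnCompacts μ]

theorem mul_measure_lt_ballMaximalFunction_le (hK : IsQuadruplingWith μ K)
    (hρ : ∀ k, 0 < ρ k) (hh : Measurable h) (s : ℝ≥0∞) :
    s * μ {x | s < ballMaximalFunction μ S c ρ h x} ≤
      2 * K * ∫⁻ x in {x | s < 2 * h x}, h x ∂μ := by
  classical
  set g := {x | s < 2 * h x}.indicator h
  set E := S.filter (fun k => s < ⨍⁻ y in ball (c k) (ρ k), h y ∂μ)
  -- discarding the values of `h` below `s / 2` lowers each average by at most `s / 2`
  have hg : ∀ x, h x ≤ g x + s / 2 := fun x => by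
    by_cases hx : s < 2 * h x
    · simp [g, indicator_of_mem (show x ∈ {x | s < 2 * h x} from hx)]
    · rw [show g x = 0 from indicator_of_notMem (s := {x | s < 2 * h x}) hx h, zero_add,
        ENNReal.le_div_iff_mul_le (by simp) (by simp), mul_comm]
      exact not_lt.1 hx
  have hE : ∀ k ∈ E, s / 2 * μ (ball (c k) (ρ k)) ≤ ∫⁻ x in ball (c k) (ρ k), g x ∂μ := by
    intro k hk
    have hs : s < ⨍⁻ y in ball (c k) (ρ k), h y ∂μ := (Finset.mem_filter.1 hk).2
    have hfin : μ (ball (c k) (ρ k)) ≠ ⊤ := measure_ball_lt_top.ne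
    refine (ENNReal.add_le_add_iff_right (ENNReal.mul_ne_top
      (ENNReal.div_ne_top (ne_top_of_lt hs) two_ne_zero) hfin)).1 ?_
    calc s / 2 * μ (ball (c k) (ρ k)) + s / 2 * μ (ball (c k) (ρ k))
        = s * μ (ball (c k) (ρ k)) := by rw [← add_mul, ENNReal.add_halves]
      _ ≤ μ (ball (c k) (ρ k)) * ⨍⁻ y in ball (c k) (ρ k), h y ∂μ := by
          rw [mul_comm]; gcongr
      _ = ∫⁻ x in ball (c k) (ρ k), h x ∂μ := measure_mul_setLAverage _ hfin
      _ ≤ ∫⁻ x in ball (c k) (ρ k), (g x + s / 2) ∂μ := lintegral_mono hg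
      _ = _ := by rw [lintegral_add_right _ measurable_const, setLIntegral_const, mul_comm]
  calc s * μ {x | s < ballMaximalFunction μ S c ρ h x}
      ≤ (s / 2 + s / 2) * μ (⋃ k ∈ E, ball (c k) (ρ k)) := by
        rw [ENNReal.add_halves]; gcongr; exact setOf_lt_ballMaximalFunction_subset s
    _ ≤ 2 * K * ∫⁻ x in {x | s < 2 * h x}, h x ∂μ := by
        rw [add_mul, ← lintegral_indicator (measurableSet_lt measurable_const (hh.const_mul 2)),
          mul_assoc, two_mul]
        exact add_le_add (mul_measure_biUnion_ball_le hK c hρ E hE)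
          (mul_measure_biUnion_ball_le hK c hρ E hE)

theorem lintegral_ballMaximalFunction_sq_le (hK : IsQuadruplingWith μ K)
    (hρ : ∀ k, 0 < ρ k) (hh : Measurable h) :
    ∫⁻ x, ballMaximalFunction μ S c ρ h x ^ 2 ∂μ ≤ 8 * K * ∫⁻ x, h x ^ 2 ∂μ := by
  have hanti : Antitone fun t : ℝ => ∫⁻ x in {x | ENNReal.ofReal t < 2 * h x}, h x ∂μ :=
    fun t t' htt' => lintegral_mono_set fun x hx =>
      (ENNReal.ofReal_le_ofReal htt').trans_lt hx
  calc ∫⁻ x, ballMaximalFunction μ S c ρ h x ^ 2 ∂μ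
      = ∫⁻ x, 1 * (∫⁻ t in Ioi 0, {t | ENNReal.ofReal t < ballMaximalFunction μ S c ρ h x}.indicator
          (fun t => 2 * ENNReal.ofReal t) t) ∂μ := by
        simp only [one_mul, setLIntegral_Ioi_indicator_two_mul_ofReal_lt]
    _ = ∫⁻ t in Ioi 0, 2 * (ENNReal.ofReal t *
          μ {x | ENNReal.ofReal t < ballMaximalFunction μ S c ρ h x}) := by
        rw [lintegral_mul_setLIntegral_indicator_comm measurable_ballMaximalFunction
          measurable_const (by fun_prop)]
        simp only [setLIntegral_one, mul_assoc]
    _ ≤ ∫⁻ t in Ioi 0, 2 * (2 * K * ∫⁻ x in {x | ENNReal.ofReal t < 2 * h x}, h x ∂μ) :=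
        lintegral_mono fun t =>
          mul_le_mul_right (mul_measure_lt_ballMaximalFunction_le hK hρ hh _) 2
    _ = 4 * K * ∫⁻ t in Ioi 0, 1 * ∫⁻ x in {x | ENNReal.ofReal t < 2 * h x}, h x ∂μ := by
        simp only [one_mul]
        rw [← lintegral_const_mul _ hanti.measurable]
        exact lintegral_congr fun t => by ring
    _ = 4 * K * ∫⁻ x, h x * (2 * h x) ∂μ := by
        rw [← lintegral_mul_setLIntegral_indicator_comm (hh.const_mul 2) hh measurable_const]
        simp only [setLIntegral_Ioi_indicator_one_ofReal_lt]
    _ = 8 * K * ∫⁻ x, h x ^ 2 ∂μ := by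
        simp only [show ∀ x, h x * (2 * h x) = 2 * h x ^ 2 from fun x => by ring]
        rw [lintegral_const_mul' 2 _ (by norm_num)]
        ring

end Maximal

section SumBallIndicator

variable [OpensMeasurableSpace X] {S : Finset ι} {c : ι → X} {r ρ : ι → ℝ} {b : ι → ℝ≥0∞}

theorem measurable_sumBallIndicator : Measurable (sumBallIndicator S c ρ b) :=
  Finset.measurable_sum _ fun _ _ => measurable_const.indicator measurableSet_ball

theorem lintegral_sumBallIndicator_sq :
    ∫⁻ x, sumBallIndicator S c ρ b x ^ 2 ∂μ =
      ∑ k ∈ S, b k * ∫⁻ x in ball (c k) (ρ k), sumBallIndicator S c ρ b x ∂μ := by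
  simp only [sq]
  exact lintegral_sum_indicator_const_mul (fun _ => measurableSet_ball) b S
    measurable_sumBallIndicator

variable [ProperSpace X] [IsFiniteMeasureOnCompacts μ]

theorem lintegral_sumBallIndicator_sq_ne_top (hb : ∀ k, b k ≠ ⊤) :
    ∫⁻ x, sumBallIndicator S c ρ b x ^ 2 ∂μ ≠ ⊤ := by
  have hle : ∀ x, sumBallIndicator S c ρ b x ≤ ∑ k ∈ S, b k := fun x =>
    Finset.sum_le_sum fun k _ => indicator_le_self _ _ x
  rw [lintegral_sumBallIndicator_sq]
  refine ENNReal.sum_ne_top.2 fun k _ => ENNReal.mul_ne_top (hb k) (ne_top_of_le_ne_top ?_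
    (setLIntegral_mono measurable_const fun x _ => hle x))
  rw [setLIntegral_const]
  exact ENNReal.mul_ne_top (ENNReal.sum_ne_top.2 fun k _ => hb k) measure_ball_lt_top.ne

theorem lintegral_sumBallIndicator_sq_le_mul_lintegral_mul_ballMaximalFunction {L : ℝ≥0∞}
    (hrρ : ∀ k, r k ≤ ρ k) (hL : ∀ k, μ (ball (c k) (ρ k)) ≤ L * μ (ball (c k) (r k))) :
    ∫⁻ x, sumBallIndicator S c ρ b x ^ 2 ∂μ ≤
      L * ∫⁻ x, sumBallIndicator S c r b x *
        ballMaximalFunction μ S c ρ (sumBallIndicator S c ρ b) x ∂μ := by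
  set F := sumBallIndicator S c ρ b
  have hG : ∫⁻ x, sumBallIndicator S c r b x * ballMaximalFunction μ S c ρ F x ∂μ =
      ∑ k ∈ S, b k * ∫⁻ x in ball (c k) (r k), ballMaximalFunction μ S c ρ F x ∂μ :=
    lintegral_sum_indicator_const_mul (fun _ => measurableSet_ball) b S
      measurable_ballMaximalFunction
  rw [lintegral_sumBallIndicator_sq, hG, Finset.mul_sum]
  refine Finset.sum_le_sum fun k hk => ?_
  calc b k * ∫⁻ x in ball (c k) (ρ k), F x ∂μ
      = b k * (μ (ball (c k) (ρ k)) * ⨍⁻ x in ball (c k) (ρ k), F x ∂μ) := by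
        rw [measure_mul_setLAverage _ measure_ball_lt_top.ne]
    _ ≤ b k * (L * ∫⁻ _ in ball (c k) (r k), ⨍⁻ x in ball (c k) (ρ k), F x ∂μ ∂μ) := by
        rw [setLIntegral_const, mul_comm (⨍⁻ x in ball (c k) (ρ k), F x ∂μ), ← mul_assoc L]
        gcongr
        exact hL k
    _ ≤ L * (b k * ∫⁻ x in ball (c k) (r k), ballMaximalFunction μ S c ρ F x ∂μ) := by
        rw [mul_left_comm]
        refine mul_le_mul_right (mul_le_mul_right ?_ _) _
        exact setLIntegral_mono measurable_ballMaximalFunction fun x hx =>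
          setLAverage_le_ballMaximalFunction hk (ball_subset_ball (hrρ k) hx)

theorem lintegral_sumBallIndicator_sq_le {L : ℝ≥0∞} (hK : IsQuadruplingWith μ K)
    (hρ : ∀ k, 0 < ρ k) (hrρ : ∀ k, r k ≤ ρ k)
    (hL : ∀ k, μ (ball (c k) (ρ k)) ≤ L * μ (ball (c k) (r k))) (hb : ∀ k, b k ≠ ⊤) :
    ∫⁻ x, sumBallIndicator S c ρ b x ^ 2 ∂μ ≤
      8 * K * L ^ 2 * ∫⁻ x, sumBallIndicator S c r b x ^ 2 ∂μ := by
  set F := sumBallIndicator S c ρ b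
  set G := sumBallIndicator S c r b
  set M := ballMaximalFunction μ S c ρ F
  set Φ := ∫⁻ x, F x ^ 2 ∂μ
  have key : Φ * Φ ≤ (8 * K * L ^ 2 * ∫⁻ x, G x ^ 2 ∂μ) * Φ :=
    calc Φ * Φ ≤ (L * ∫⁻ x, G x * M x ∂μ) ^ 2 := by
          rw [← sq]
          gcongr
          exact lintegral_sumBallIndicator_sq_le_mul_lintegral_mul_ballMaximalFunction hrρ hL
      _ = L ^ 2 * (∫⁻ x, G x * M x ∂μ) ^ 2 := mul_pow _ _ _
      _ ≤ L ^ 2 * ((∫⁻ x, G x ^ 2 ∂μ) * ∫⁻ x, M x ^ 2 ∂μ) := by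
          gcongr
          exact sq_lintegral_mul_le measurable_sumBallIndicator.aemeasurable
            measurable_ballMaximalFunction.aemeasurable
      _ ≤ L ^ 2 * ((∫⁻ x, G x ^ 2 ∂μ) * (8 * K * Φ)) := by
          gcongr
          exact lintegral_ballMaximalFunction_sq_le hK hρ measurable_sumBallIndicator
      _ = (8 * K * L ^ 2 * ∫⁻ x, G x ^ 2 ∂μ) * Φ := by ring
  rcases eq_or_ne Φ 0 with h0 | h0
  · exact h0 ▸ zero_le
  · exact (ENNReal.mul_le_mul_iff_left h0 (lintegral_sumBallIndicator_sq_ne_top hb)).1 key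

end SumBallIndicator

end MetricMeasure

theorem enorm_mul_indicator_one {X : Type*} {a : ℝ} (ha : 0 ≤ a) (U : Set X) (x : X) :
    ‖a * U.indicator (fun _ => (1 : ℝ)) x‖ₑ = U.indicator (fun _ => ENNReal.ofReal a) x := by
  by_cases hx : x ∈ U <;> simp [hx, Real.enorm_eq_ofReal ha]

theorem enorm_tsum_mul_indicator_one_le {X ι : Type*} {a : ι → ℝ} (ha : ∀ k, 0 ≤ a k)
    (U : ι → Set X) (x : X) :
    ‖∑' k, a k * (U k).indicator (fun _ => (1 : ℝ)) x‖ₑ ≤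
      ∑' k, (U k).indicator (fun _ => ENNReal.ofReal (a k)) x :=
  enorm_tsum_le_tsum_enorm.trans_eq (tsum_congr fun k => enorm_mul_indicator_one (ha k) (U k) x)

theorem enorm_tsum_mul_indicator_one_of_pairwise_disjoint {X ι : Type*} {a : ι → ℝ}
    (ha : ∀ k, 0 ≤ a k) {U : ι → Set X} (hU : Pairwise fun k l => Disjoint (U k) (U l))
    (x : X) :
    ‖∑' k, a k * (U k).indicator (fun _ => (1 : ℝ)) x‖ₑ =
      ∑' k, (U k).indicator (fun _ => ENNReal.ofReal (a k)) x := by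
  have hnonneg : ∀ k, 0 ≤ a k * (U k).indicator (fun _ => (1 : ℝ)) x := fun k =>
    mul_nonneg (ha k) (indicator_nonneg (fun _ _ => zero_le_one) x)
  have hmem : ∀ k, a k * (U k).indicator (fun _ => (1 : ℝ)) x ≠ 0 → x ∈ U k := fun k hk => by
    by_contra hx; simp [hx] at hk
  have hsupp : (Function.support fun k => a k * (U k).indicator (fun _ => (1 : ℝ)) x).Finite :=
    Set.Subsingleton.finite fun k hk l hl => by_contra fun hkl =>
      (hU hkl).notMem_of_mem_left (hmem k hk) (hmem l hl)
  rw [Real.enorm_eq_ofReal (tsum_nonneg hnonneg),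
    ENNReal.ofReal_tsum_of_nonneg hnonneg (summable_of_hasFiniteSupport hsupp)]
  exact tsum_congr fun k => by
    rw [← Real.enorm_eq_ofReal (hnonneg k), enorm_mul_indicator_one (ha k)]

theorem addHaar_ball_mul_eq {E : Type*} [NormedAddCommGroup E] [NormedSpace ℝ E]
    [MeasurableSpace E] [BorelSpace E] [FiniteDimensional ℝ E] [Nontrivial E] (μ : Measure E)
    [μ.IsAddHaarMeasure] (x : E) {s : ℝ} (hs : 0 ≤ s) (r : ℝ) :
    μ (ball x (s * r)) = ENNReal.ofReal (s ^ Module.finrank ℝ E) * μ (ball x r) := by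
  rw [Measure.addHaar_ball_mul μ x hs, Measure.addHaar_ball_center μ x]

theorem isQuadruplingWith_addHaar {E : Type*} [NormedAddCommGroup E] [NormedSpace ℝ E]
    [MeasurableSpace E] [BorelSpace E] [FiniteDimensional ℝ E] [Nontrivial E] (μ : Measure E)
    [μ.IsAddHaarMeasure] : IsQuadruplingWith μ (ENNReal.ofReal (4 ^ Module.finrank ℝ E)) :=
  fun x ρ _ => by
    rw [Measure.addHaar_closedBall_eq_addHaar_ball, addHaar_ball_mul_eq μ x (by norm_num)]

theorem bojarski_constant_le {lam : ℝ} (hlam : 0 ≤ lam) :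
    8 * ENNReal.ofReal (4 ^ 2) * ENNReal.ofReal (lam ^ 2) ^ 2 ≤
      ((12 * lam.toNNReal ^ 2 : NNReal) : ℝ≥0∞) ^ 2 := by
  have h12 : ((12 * lam.toNNReal ^ 2 : NNReal) : ℝ≥0∞) = ENNReal.ofReal (12 * lam ^ 2) := by
    rw [ENNReal.ofReal_mul (by norm_num), ENNReal.ofReal_pow hlam]
    simp [ENNReal.ofReal]
  rw [h12, ← ENNReal.ofReal_ofNat 8, ← ENNReal.ofReal_pow (by positivity),
    ← ENNReal.ofReal_pow (by positivity), ← ENNReal.ofReal_mul (by norm_num),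
    ← ENNReal.ofReal_mul (by positivity)]
  exact ENNReal.ofReal_le_ofReal (by nlinarith [pow_nonneg (sq_nonneg lam) 2])

/-- Bojarski's lemma: for each `λ ≥ 1` there is a constant `C` depending only on `λ` such that
for every finite or countable collection of pairwise disjoint balls `B k` in `ℝ²` and
nonnegative reals `a k`, `‖Σ a k χ_{λ B k}‖_{L²} ≤ C ‖Σ a k χ_{B k}‖_{L²}`. -/
theorem stmt_4 (lam : ℝ) (hlam : 1 ≤ lam) :
    ∃ C : NNReal, ∀ (I : Type) [Countable I],
      ∀ (c : I → EuclideanSpace ℝ (Fin 2)) (r : I → ℝ) (a : I → ℝ),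
      (∀ k, 0 < r k) → (∀ k, 0 ≤ a k) →
      (Pairwise fun k l => Disjoint (Metric.ball (c k) (r k)) (Metric.ball (c l) (r l))) →
      eLpNorm (fun x => ∑' k : I,
          a k * (Metric.ball (c k) (lam * r k)).indicator (fun _ => (1 : ℝ)) x) 2 volume ≤
        C * eLpNorm (fun x => ∑' k : I,
          a k * (Metric.ball (c k) (r k)).indicator (fun _ => (1 : ℝ)) x) 2 volume := by
  refine ⟨12 * lam.toNNReal ^ 2, fun I _ c r a hr ha hdisj => ?_⟩
  have hlam0 : 0 ≤ lam := zero_le_one.trans hlam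
  have hfin (S : Finset I) := lintegral_sumBallIndicator_sq_le (S := S) (c := c)
    (isQuadruplingWith_addHaar volume) (fun k => mul_pos (one_pos.trans_le hlam) (hr k))
    (fun k => le_mul_of_one_le_left (hr k).le hlam)
    (fun k => (addHaar_ball_mul_eq volume (c k) hlam0 (r k)).le)
    (fun k => ENNReal.ofReal_ne_top (r := a k))
  simp only [finrank_euclideanSpace_fin] at hfin
  calc _ ≤ eLpNorm (fun x => ∑' k, (ball (c k) (lam * r k)).indicator
          (fun _ => ENNReal.ofReal (a k)) x) 2 volume :=
        eLpNorm_mono_enorm fun x =>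
          (enorm_tsum_mul_indicator_one_le ha _ x).trans_eq (enorm_eq_self _).symm
    _ ≤ _ * eLpNorm (fun x => ∑' k, (ball (c k) (r k)).indicator
          (fun _ => ENNReal.ofReal (a k)) x) 2 volume :=
        eLpNorm_two_le_mul_of_lintegral_sq_le (lintegral_sq_tsum_le_of_forall_finset
          (fun k => measurable_const.indicator measurableSet_ball)
          fun S => (hfin S).trans (mul_le_mul_left (bojarski_constant_le hlam0) _))
    _ = _ := by
        congr 1
        exact eLpNorm_congr_enorm_ae (ae_of_all _ fun x => (enorm_eq_self _).trans
          (enorm_tsum_mul_indicator_one_of_pairwise_disjoint ha hdisj x).symm)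
end

section
/- Let Ω and Ω' be compact subsets of ℝ² with closed ball conditions: B̄(0,1) ⊆ Ω ⊆ B̄(0,C) and B̄(p', r') ⊆ Ω' ⊆ B̄(p', C r') for some C ≥ 1, p' ∈ ℝ², r' > 0. If Ω' = A(Ω) for an invertible linear map A : ℝ² → ℝ², then the dilatation of A, i.e., the ratio of the largest to smallest singular value of A, is bounded above by a constant depending only on C. -/
/-!
Both singular values of `A` are controlled by the two ball conditions, since the difference of
two points of a ball `B̄(c, R)` has norm at most `2R`. For a unit vector `v`, the points `±A v`
lie in `A(Ω) ⊆ B̄(p', C r')`, so `‖A v‖ ≤ C r'`. Conversely, rescaling `v` to `w` with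
`‖A w‖ = r'`, the points `p' ± A w` of `B̄(p', r')` have preimages `a, b ∈ B̄(0, C)` with
`a - b = 2 w`, so `r' ≤ C ‖A v‖`. Hence the dilatation is at most `C²`.
-/

open Metric

theorem Metric.dist_le_two_mul_of_mem_closedBall {X : Type*} [PseudoMetricSpace X] {c x y : X}
    {R : ℝ} (hx : x ∈ closedBall c R) (hy : y ∈ closedBall c R) : dist x y ≤ 2 * R := by
  linarith [dist_triangle_right x y c, mem_closedBall.1 hx, mem_closedBall.1 hy]

namespace LinearMap

variable {E F : Type*} [NormedAddCommGroup E] [NormedSpace ℝ E]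
  [NormedAddCommGroup F] [NormedSpace ℝ F]

theorem norm_apply_le_of_image_closedBall_subset (A : E →ₗ[ℝ] F) {p : F} {R : ℝ}
    (h : A '' closedBall 0 1 ⊆ closedBall p R) {v : E} (hv : ‖v‖ ≤ 1) : ‖A v‖ ≤ R := by
  have hmem : ∀ u : E, ‖u‖ ≤ 1 → A u ∈ closedBall p R := fun u hu =>
    h ⟨u, mem_closedBall_zero_iff.mpr hu, rfl⟩
  have hdist : dist (A v) (A (-v)) ≤ 2 * R :=
    dist_le_two_mul_of_mem_closedBall (hmem v hv) (hmem (-v) (by simpa using hv))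
  have htwo : dist (A v) (A (-v)) = 2 * ‖A v‖ := by
    rw [dist_eq_norm, map_neg, sub_neg_eq_add, ← two_smul ℝ, norm_smul, Real.norm_two]
  linarith

theorem mul_norm_le_mul_norm_apply_of_closedBall_subset_image (A : E →ₗ[ℝ] F)
    (hA : Function.Injective A) {p : F} {r R : ℝ} (hr : 0 ≤ r)
    (h : closedBall p r ⊆ A '' closedBall 0 R) (v : E) : r * ‖v‖ ≤ R * ‖A v‖ := by
  rcases eq_or_ne v 0 with rfl | hv
  · simp
  have hAv : 0 < ‖A v‖ := norm_pos_iff.mpr fun h0 => hv (hA (h0.trans (map_zero A).symm))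
  set w : E := (r / ‖A v‖) • v
  have hAw : ‖A w‖ = r := by
    rw [map_smul, norm_smul, Real.norm_of_nonneg (by positivity), div_mul_cancel₀ _ hAv.ne']
  have hw : ‖w‖ = r * ‖v‖ / ‖A v‖ := by
    rw [norm_smul, Real.norm_of_nonneg (by positivity), div_mul_eq_mul_div]
  clear_value w
  obtain ⟨a, ha, hAa⟩ := h (show p + A w ∈ closedBall p r by simp [hAw])
  obtain ⟨b, hb, hAb⟩ := h (show p - A w ∈ closedBall p r by simp [hAw])
  have hab : a - b = (2 : ℝ) • w := hA <| by
    rw [map_sub, hAa, hAb, map_smul]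
    module
  have hwR : ‖w‖ ≤ R := by
    have := dist_le_two_mul_of_mem_closedBall ha hb
    rw [dist_eq_norm, hab, norm_smul, Real.norm_two] at this
    linarith
  rw [hw, div_le_iff₀ hAv] at hwR
  linarith

end LinearMap

theorem Real.sSup_div_sInf_le {S : Set ℝ} (hS : S.Nonempty) {a b : ℝ} (ha : 0 < a)
    (hlow : ∀ x ∈ S, a ≤ x) (hup : ∀ x ∈ S, x ≤ b) : sSup S / sInf S ≤ b / a := by
  obtain ⟨x, hx⟩ := hS
  have hb : 0 ≤ b := ha.le.trans ((hlow x hx).trans (hup x hx))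
  exact div_le_div₀ hb (csSup_le ⟨x, hx⟩ hup) ha (le_csInf ⟨x, hx⟩ hlow)

/-- If `B̄(0,1) ⊆ Ω ⊆ B̄(0,C)` and `B̄(p',r') ⊆ Ω' ⊆ B̄(p', C r')` are compact subsets of `ℝ²`
with `Ω' = A(Ω)` for an invertible linear map `A`, then the dilatation of `A` (the ratio of
its largest to smallest singular value) is bounded above by a constant depending only
on `C`. -/
theorem stmt_11 (C : ℝ) (hC : 1 ≤ C) :
    ∃ K : ℝ, ∀ (Ω Ω' : Set (EuclideanSpace ℝ (Fin 2)))
      (A : EuclideanSpace ℝ (Fin 2) ≃ₗ[ℝ] EuclideanSpace ℝ (Fin 2))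
      (p' : EuclideanSpace ℝ (Fin 2)) (r' : ℝ),
      IsCompact Ω → IsCompact Ω' → 0 < r' →
      Metric.closedBall 0 1 ⊆ Ω → Ω ⊆ Metric.closedBall 0 C →
      Metric.closedBall p' r' ⊆ Ω' → Ω' ⊆ Metric.closedBall p' (C * r') →
      Ω' = ⇑A '' Ω →
      sSup {x : ℝ | ∃ v : EuclideanSpace ℝ (Fin 2), ‖v‖ = 1 ∧ x = ‖A v‖} /
        sInf {x : ℝ | ∃ v : EuclideanSpace ℝ (Fin 2), ‖v‖ = 1 ∧ x = ‖A v‖} ≤ K := by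
  have hC0 : 0 < C := zero_lt_one.trans_le hC
  refine ⟨C * C, fun Ω Ω' A p' r' _ _ hr' hΩ₁ hΩ₂ hΩ'₁ hΩ'₂ himg => ?_⟩
  subst himg
  have hup : ∀ v : EuclideanSpace ℝ (Fin 2), ‖v‖ = 1 → ‖A v‖ ≤ C * r' := fun v hv =>
    A.toLinearMap.norm_apply_le_of_image_closedBall_subset
      ((Set.image_mono hΩ₁).trans hΩ'₂) hv.le
  have hlow : ∀ v : EuclideanSpace ℝ (Fin 2), ‖v‖ = 1 → r' / C ≤ ‖A v‖ := fun v hv => by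
    have := A.toLinearMap.mul_norm_le_mul_norm_apply_of_closedBall_subset_image A.injective
      hr'.le (hΩ'₁.trans (Set.image_mono hΩ₂)) v
    rw [div_le_iff₀' hC0]
    simpa [hv] using this
  refine (Real.sSup_div_sInf_le ?_ (div_pos hr' hC0) ?_ ?_).trans_eq
    (show C * r' / (r' / C) = C * C by field_simp)
  · exact ⟨_, EuclideanSpace.single 0 1, by simp, rfl⟩
  · rintro _ ⟨v, hv, rfl⟩
    exact hlow v hv
  · rintro _ ⟨v, hv, rfl⟩
    exact hup v hv
end
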